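/- arXiv:2510.08239 — 6 statements merged into one kernel-verified Lean document; each statement's English description precedes it below -/
import Mathlib

section
/- Let ρ be a separable density matrix on ℂ^m ⊗ ℂ^n, and let A₁, A₂ be Hermitian m×m matrices and B₁, B₂ Hermitian n×n matrices with A_i² ≤ I and B_j² ≤ I (in the Loewner order). Then the CHSH expectation value satisfies |Tr(ρ C)| ≤ 2, where C = A₁⊗B₁ + A₁⊗B₂ + A₂⊗B₁ − A₂⊗B₂. That is, separable states satisfy the CHSH inequality. -/
open Matrix Kronecker
open scoped ComplexOrder

noncomputable section

/-- A density matrix: positive semidefinite with unit trace. -/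
def IsDensityMatrix {d : Type*} [Fintype d] [DecidableEq d] (ρ : Matrix d d ℂ) : Prop :=
  ρ.PosSemidef ∧ ρ.trace = 1

/-- A density matrix on `ℂ^m ⊗ ℂ^n` is separable if it is a finite convex combination
of Kronecker products of density matrices on the factors. -/
def IsSepState {m n : ℕ} (ρ : Matrix (Fin m × Fin n) (Fin m × Fin n) ℂ) : Prop :=
  ∃ (k : ℕ) (p : Fin k → ℝ) (σ : Fin k → Matrix (Fin m) (Fin m) ℂ)
    (τ : Fin k → Matrix (Fin n) (Fin n) ℂ),
    (∀ i, 0 ≤ p i) ∧ (∑ i, p i = 1) ∧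
    (∀ i, IsDensityMatrix (σ i)) ∧ (∀ i, IsDensityMatrix (τ i)) ∧
    ρ = ∑ i, ((p i : ℂ)) • ((σ i) ⊗ₖ (τ i))

/-! For a product state `σ ⊗ τ` the expectation values `aᵢ = Tr(σAᵢ)`, `bⱼ = Tr(τBⱼ)` are real
numbers in `[-1, 1]`, because `A² ≤ 1` forces `-1 ≤ A ≤ 1` in the Loewner order. The CHSH value
of `σ ⊗ τ` is then `a₁(b₁ + b₂) + a₂(b₁ - b₂)`, of modulus at most `|b₁ + b₂| + |b₁ - b₂| ≤ 2`,
and the bound passes to convex combinations of product states by the triangle inequality. -/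

lemma chsh_abs_le_two {a₁ a₂ b₁ b₂ : ℝ} (ha₁ : |a₁| ≤ 1) (ha₂ : |a₂| ≤ 1)
    (hb₁ : |b₁| ≤ 1) (hb₂ : |b₂| ≤ 1) :
    |a₁ * b₁ + a₁ * b₂ + a₂ * b₁ - a₂ * b₂| ≤ 2 := by
  have hb : |b₁ + b₂| + |b₁ - b₂| ≤ 2 := by
    rw [abs_le] at hb₁ hb₂
    cases abs_cases (b₁ + b₂) <;> cases abs_cases (b₁ - b₂) <;> linarith
  calc |a₁ * b₁ + a₁ * b₂ + a₂ * b₁ - a₂ * b₂|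
      = |a₁ * (b₁ + b₂) + a₂ * (b₁ - b₂)| := by congr 1; ring
    _ ≤ |a₁| * |b₁ + b₂| + |a₂| * |b₁ - b₂| := by
        rw [← abs_mul, ← abs_mul]; exact abs_add_le _ _
    _ ≤ 1 * |b₁ + b₂| + 1 * |b₁ - b₂| := by gcongr
    _ ≤ 2 := by linarith

namespace Matrix

variable {𝕜 d : Type*} [RCLike 𝕜] [Fintype d]

lemma PosSemidef.trace_mul_nonneg {P Q : Matrix d d 𝕜} (hP : P.PosSemidef)
    (hQ : Q.PosSemidef) : 0 ≤ (P * Q).trace := by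
  classical
  open scoped MatrixOrder in
  obtain ⟨B, rfl⟩ := CStarAlgebra.nonneg_iff_eq_star_mul_self.mp hQ.nonneg
  rw [star_eq_conjTranspose, ← Matrix.mul_assoc, trace_mul_cycle]
  exact (hP.mul_mul_conjTranspose_same B).trace_nonneg

lemma IsHermitian.posSemidef_one_add {A : Matrix d d 𝕜} [DecidableEq d] (hA : A.IsHermitian)
    (hA2 : (1 - A * A).PosSemidef) : (1 + A).PosSemidef := by
  have hsq : ((1 + A) * (1 + A)).PosSemidef := by
    have := posSemidef_conjTranspose_mul_self (1 + A)
    rwa [(isHermitian_one.add hA).eq] at this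
  have hdouble : (1 + A) + (1 + A) = (1 + A) * (1 + A) + (1 - A * A) := by noncomm_ring
  have h : 1 + A = (2⁻¹ : ℝ) • ((1 + A) + (1 + A)) := by
    rw [← two_smul ℝ (1 + A), smul_smul, inv_mul_cancel₀ two_ne_zero, one_smul]
  rw [h, hdouble]
  exact (hsq.add hA2).smul (by norm_num)

end Matrix

lemma IsDensityMatrix.exists_abs_le_one_trace_mul_eq {d : Type*} [Fintype d] [DecidableEq d]
    {σ A : Matrix d d ℂ} (hσ : IsDensityMatrix σ) (hA : A.IsHermitian)
    (hA2 : (1 - A * A).PosSemidef) : ∃ a : ℝ, |a| ≤ 1 ∧ (σ * A).trace = a := by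
  have expect_one_add {X : Matrix d d ℂ} (hX : (1 + X).PosSemidef) : 0 ≤ 1 + (σ * X).trace := by
    simpa [Matrix.mul_add, hσ.2] using hσ.1.trace_mul_nonneg hX
  have hle := expect_one_add (hA.posSemidef_one_add hA2)
  have hge := expect_one_add (X := -A) (hA.neg.posSemidef_one_add (by simpa using hA2))
  -- Nonnegativity in `ℂ` also pins down the imaginary part, so `Tr(σA)` is real.
  rw [Complex.nonneg_iff] at hle hge
  simp only [Matrix.mul_neg, trace_neg, Complex.add_re, Complex.add_im, Complex.neg_re,
    Complex.neg_im, Complex.one_re, Complex.one_im] at hle hge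
  refine ⟨(σ * A).trace.re, abs_le.mpr ⟨by linarith, by linarith⟩, Complex.ext rfl ?_⟩
  simp only [Complex.ofReal_im]
  linarith

def chshOperator {m n : Type*} (A₁ A₂ : Matrix m m ℂ) (B₁ B₂ : Matrix n n ℂ) :
    Matrix (m × n) (m × n) ℂ :=
  A₁ ⊗ₖ B₁ + A₁ ⊗ₖ B₂ + A₂ ⊗ₖ B₁ - A₂ ⊗ₖ B₂

section ProductState

variable {m n : Type*} [Fintype m] [Fintype n]

lemma trace_kronecker_mul_chshOperator (σ A₁ A₂ : Matrix m m ℂ) (τ B₁ B₂ : Matrix n n ℂ) :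
    ((σ ⊗ₖ τ) * chshOperator A₁ A₂ B₁ B₂).trace =
      (σ * A₁).trace * (τ * B₁).trace + (σ * A₁).trace * (τ * B₂).trace +
        (σ * A₂).trace * (τ * B₁).trace - (σ * A₂).trace * (τ * B₂).trace := by
  simp only [chshOperator, Matrix.mul_sub, Matrix.mul_add, ← mul_kronecker_mul, trace_sub,
    trace_add, trace_kronecker]

lemma norm_trace_kronecker_mul_chshOperator_le_two [DecidableEq m] [DecidableEq n]
    {σ A₁ A₂ : Matrix m m ℂ} {τ B₁ B₂ : Matrix n n ℂ}
    (hσ : IsDensityMatrix σ) (hτ : IsDensityMatrix τ)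
    (hA₁ : A₁.IsHermitian) (hA₂ : A₂.IsHermitian) (hB₁ : B₁.IsHermitian) (hB₂ : B₂.IsHermitian)
    (hA₁le : (1 - A₁ * A₁).PosSemidef) (hA₂le : (1 - A₂ * A₂).PosSemidef)
    (hB₁le : (1 - B₁ * B₁).PosSemidef) (hB₂le : (1 - B₂ * B₂).PosSemidef) :
    ‖((σ ⊗ₖ τ) * chshOperator A₁ A₂ B₁ B₂).trace‖ ≤ 2 := by
  obtain ⟨a₁, ha₁, ea₁⟩ := hσ.exists_abs_le_one_trace_mul_eq hA₁ hA₁le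
  obtain ⟨a₂, ha₂, ea₂⟩ := hσ.exists_abs_le_one_trace_mul_eq hA₂ hA₂le
  obtain ⟨b₁, hb₁, eb₁⟩ := hτ.exists_abs_le_one_trace_mul_eq hB₁ hB₁le
  obtain ⟨b₂, hb₂, eb₂⟩ := hτ.exists_abs_le_one_trace_mul_eq hB₂ hB₂le
  rw [trace_kronecker_mul_chshOperator, ea₁, ea₂, eb₁, eb₂]
  exact_mod_cast chsh_abs_le_two ha₁ ha₂ hb₁ hb₂

end ProductState

theorem separable_satisfies_CHSH_general {m n : ℕ}
    (ρ : Matrix (Fin m × Fin n) (Fin m × Fin n) ℂ)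
    (hρsep : IsSepState ρ)
    (A₁ A₂ : Matrix (Fin m) (Fin m) ℂ) (B₁ B₂ : Matrix (Fin n) (Fin n) ℂ)
    (hA₁ : A₁.IsHermitian) (hA₂ : A₂.IsHermitian)
    (hB₁ : B₁.IsHermitian) (hB₂ : B₂.IsHermitian)
    (hA₁le : (1 - A₁ * A₁).PosSemidef) (hA₂le : (1 - A₂ * A₂).PosSemidef)
    (hB₁le : (1 - B₁ * B₁).PosSemidef) (hB₂le : (1 - B₂ * B₂).PosSemidef) :
    ‖(ρ * (A₁ ⊗ₖ B₁ + A₁ ⊗ₖ B₂ + A₂ ⊗ₖ B₁ - A₂ ⊗ₖ B₂)).trace‖ ≤ 2 := by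
  obtain ⟨k, p, σ, τ, hp, hp_sum, hσ, hτ, rfl⟩ := hρsep
  change ‖(_ * chshOperator A₁ A₂ B₁ B₂).trace‖ ≤ 2
  rw [Matrix.sum_mul, trace_sum]
  calc ‖∑ i, ((p i : ℂ) • (σ i ⊗ₖ τ i) * chshOperator A₁ A₂ B₁ B₂).trace‖
      ≤ ∑ i, ‖((p i : ℂ) • (σ i ⊗ₖ τ i) * chshOperator A₁ A₂ B₁ B₂).trace‖ := norm_sum_le _ _
    _ = ∑ i, p i * ‖((σ i ⊗ₖ τ i) * chshOperator A₁ A₂ B₁ B₂).trace‖ := by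
        simp only [Matrix.smul_mul, trace_smul, norm_smul, Complex.norm_real, Real.norm_eq_abs,
          abs_of_nonneg (hp _)]
    _ ≤ ∑ i, p i * 2 := by
        gcongr with i
        · exact hp i
        · exact norm_trace_kronecker_mul_chshOperator_le_two (hσ i) (hτ i) hA₁ hA₂ hB₁ hB₂
            hA₁le hA₂le hB₁le hB₂le
    _ = 2 := by rw [← Finset.sum_mul, hp_sum, one_mul]

/-- Separable states satisfy the CHSH inequality: for Hermitian observables with
`A_i² ≤ I`, `B_j² ≤ I` in the Loewner order, `|Tr(ρ C)| ≤ 2` where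
`C = A₁⊗B₁ + A₁⊗B₂ + A₂⊗B₁ − A₂⊗B₂`. -/
theorem separable_satisfies_CHSH {m n : ℕ}
    (ρ : Matrix (Fin m × Fin n) (Fin m × Fin n) ℂ)
    (hρd : IsDensityMatrix ρ) (hρsep : IsSepState ρ)
    (A₁ A₂ : Matrix (Fin m) (Fin m) ℂ) (B₁ B₂ : Matrix (Fin n) (Fin n) ℂ)
    (hA₁ : A₁.IsHermitian) (hA₂ : A₂.IsHermitian)
    (hB₁ : B₁.IsHermitian) (hB₂ : B₂.IsHermitian)
    (hA₁le : (1 - A₁ * A₁).PosSemidef) (hA₂le : (1 - A₂ * A₂).PosSemidef)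
    (hB₁le : (1 - B₁ * B₁).PosSemidef) (hB₂le : (1 - B₂ * B₂).PosSemidef) :
    ‖(ρ * (A₁ ⊗ₖ B₁ + A₁ ⊗ₖ B₂ + A₂ ⊗ₖ B₁ - A₂ ⊗ₖ B₂)).trace‖ ≤ 2 :=
  separable_satisfies_CHSH_general ρ hρsep A₁ A₂ B₁ B₂ hA₁ hA₂ hB₁ hB₂ hA₁le hA₂le hB₁le hB₂le
end
end

section
/- Let ρ be any density matrix on ℂ^m ⊗ ℂ^n, and let A₁, A₂ be dichotomic observables on ℂ^m and B₁, B₂ dichotomic observables on ℂ^n. Then |Tr(ρ C)| ≤ 2√2, where C = A₁⊗B₁ + A₁⊗B₂ + A₂⊗B₁ − A₂⊗B₂. This is the Tsirelson bound on the CHSH expectation value. -/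
/-
With `a₁, a₂` and `b₁, b₂` commuting self-adjoint involutions, the CHSH operator
`C = a₁b₁ + a₁b₂ + a₂b₁ - a₂b₂` satisfies the sum-of-squares identity
`(a₁ + a₂ - √2 b₁)² + (a₁ - a₂ - √2 b₂)² = 8 - 2√2 C`, so `C ≤ 2√2`; flipping the signs of
`b₁, b₂` gives `-2√2 ≤ C`. Since `X ↦ Tr(ρX)` is a positive functional taking `1` to `1`,
`Tr(ρC)` is then a real number in `[-2√2, 2√2]`.
-/

open Matrix Kronecker
open scoped ComplexOrder

noncomputable section

/-- A dichotomic observable: a Hermitian matrix squaring to the identity. -/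
def IsDichotomic {d : Type*} [Fintype d] [DecidableEq d] (A : Matrix d d ℂ) : Prop :=
  A.IsHermitian ∧ A * A = 1

open scoped MatrixOrder

def chsh {R : Type*} [Ring R] (a₁ a₂ b₁ b₂ : R) : R := a₁ * b₁ + a₁ * b₂ + a₂ * b₁ - a₂ * b₂

lemma chsh_neg_neg {R : Type*} [Ring R] (a₁ a₂ b₁ b₂ : R) :
    chsh a₁ a₂ (-b₁) (-b₂) = -chsh a₁ a₂ b₁ b₂ := by
  simp only [chsh, mul_neg]
  abel

lemma chsh_sum_of_squares {R : Type*} [Ring R] [Algebra ℝ R] {a₁ a₂ b₁ b₂ : R}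
    (ha₁ : a₁ * a₁ = 1) (ha₂ : a₂ * a₂ = 1) (hb₁ : b₁ * b₁ = 1) (hb₂ : b₂ * b₂ = 1)
    (h₁₁ : Commute a₁ b₁) (h₁₂ : Commute a₁ b₂) (h₂₁ : Commute a₂ b₁) (h₂₂ : Commute a₂ b₂)
    (s : ℝ) :
    (a₁ + a₂ - s • b₁) * (a₁ + a₂ - s • b₁) + (a₁ - a₂ - s • b₂) * (a₁ - a₂ - s • b₂) =
      (4 + 2 * s ^ 2) • 1 - (2 * s) • chsh a₁ a₂ b₁ b₂ := by
  simp only [chsh, add_mul, mul_add, sub_mul, mul_sub, smul_mul_assoc, mul_smul_comm,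
    ha₁, ha₂, hb₁, hb₂, h₁₁.symm.eq, h₁₂.symm.eq, h₂₁.symm.eq, h₂₂.symm.eq]
  module

section StarOrderedRing

variable {R : Type*} [Ring R] [StarRing R] [PartialOrder R] [StarOrderedRing R]
  [Algebra ℝ R] [StarModule ℝ R]

lemma chsh_le {a₁ a₂ b₁ b₂ : R}
    (ha₁ : IsSelfAdjoint a₁) (ha₂ : IsSelfAdjoint a₂) (hb₁ : IsSelfAdjoint b₁)
    (hb₂ : IsSelfAdjoint b₂)
    (ha₁' : a₁ * a₁ = 1) (ha₂' : a₂ * a₂ = 1) (hb₁' : b₁ * b₁ = 1) (hb₂' : b₂ * b₂ = 1)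
    (h₁₁ : Commute a₁ b₁) (h₁₂ : Commute a₁ b₂) (h₂₁ : Commute a₂ b₁) (h₂₂ : Commute a₂ b₂) :
    chsh a₁ a₂ b₁ b₂ ≤ (2 * √2) • 1 := by
  have hsa {x y b : R} (hx : IsSelfAdjoint x) (hy : IsSelfAdjoint y) (hb : IsSelfAdjoint b) :
      IsSelfAdjoint (x + y - √2 • b) :=
    (hx.add hy).sub ((IsSelfAdjoint.all _).smul hb)
  have hsos : 0 ≤ (8 : ℝ) • (1 : R) - (2 * √2) • chsh a₁ a₂ b₁ b₂ := by
    have := add_nonneg (hsa ha₁ ha₂ hb₁).mul_self_nonneg (hsa ha₁ ha₂.neg hb₂).mul_self_nonneg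
    rwa [← sub_eq_add_neg, chsh_sum_of_squares ha₁' ha₂' hb₁' hb₂' h₁₁ h₁₂ h₂₁ h₂₂,
      Real.sq_sqrt zero_le_two, show (4 + 2 * 2 : ℝ) = 8 by norm_num] at this
  -- divide by `2√2`, using `8 / (2√2) = 2√2`
  have hscaled := smul_nonneg (inv_nonneg.mpr (by positivity : (0 : ℝ) ≤ 2 * √2)) hsos
  rw [smul_sub, smul_smul, smul_smul, inv_mul_cancel₀ (by positivity), one_smul,
    sub_nonneg] at hscaled
  convert hscaled using 2
  field_simp
  norm_num

lemma chsh_mem_Icc {a₁ a₂ b₁ b₂ : R}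
    (ha₁ : IsSelfAdjoint a₁) (ha₂ : IsSelfAdjoint a₂) (hb₁ : IsSelfAdjoint b₁)
    (hb₂ : IsSelfAdjoint b₂)
    (ha₁' : a₁ * a₁ = 1) (ha₂' : a₂ * a₂ = 1) (hb₁' : b₁ * b₁ = 1) (hb₂' : b₂ * b₂ = 1)
    (h₁₁ : Commute a₁ b₁) (h₁₂ : Commute a₁ b₂) (h₂₁ : Commute a₂ b₁) (h₂₂ : Commute a₂ b₂) :
    chsh a₁ a₂ b₁ b₂ ∈ Set.Icc (-((2 * √2) • 1)) ((2 * √2) • 1) := by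
  refine ⟨neg_le.mp ?_, chsh_le ha₁ ha₂ hb₁ hb₂ ha₁' ha₂' hb₁' hb₂' h₁₁ h₁₂ h₂₁ h₂₂⟩
  rw [← chsh_neg_neg]
  exact chsh_le ha₁ ha₂ hb₁.neg hb₂.neg ha₁' ha₂' (by rw [neg_mul_neg, hb₁'])
    (by rw [neg_mul_neg, hb₂']) h₁₁.neg_right h₁₂.neg_right h₂₁.neg_right h₂₂.neg_right

end StarOrderedRing

lemma Complex.norm_le_of_mem_Icc {z : ℂ} {r : ℝ} (hz : z ∈ Set.Icc (-(r : ℂ)) r) : ‖z‖ ≤ r := by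
  obtain ⟨hlo, hhi⟩ := hz
  rw [← ofReal_neg] at hlo
  have hre := eq_re_of_ofReal_le hlo
  rw [hre] at hlo hhi ⊢
  rw [norm_real, Real.norm_eq_abs, abs_le]
  exact ⟨real_le_real.mp hlo, real_le_real.mp hhi⟩

namespace Matrix

variable {n 𝕜 : Type*} [Fintype n] [RCLike 𝕜]

lemma trace_mul_nonneg {ρ X : Matrix n n 𝕜} (hρ : 0 ≤ ρ) (hX : 0 ≤ X) : 0 ≤ (ρ * X).trace := by
  classical
  obtain ⟨B, rfl⟩ := CStarAlgebra.nonneg_iff_eq_star_mul_self.mp hρ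
  rw [Matrix.mul_assoc, trace_mul_comm, star_eq_conjTranspose]
  exact (hX.posSemidef.mul_mul_conjTranspose_same B).trace_nonneg

lemma trace_mul_mono {ρ X Y : Matrix n n 𝕜} (hρ : 0 ≤ ρ) (hXY : X ≤ Y) :
    (ρ * X).trace ≤ (ρ * Y).trace := by
  simpa [Matrix.mul_sub] using trace_mul_nonneg hρ (sub_nonneg.mpr hXY)

lemma norm_trace_mul_le_of_mem_Icc [DecidableEq n] {ρ X : Matrix n n ℂ} (hρ : IsDensityMatrix ρ)
    {r : ℝ} (hX : X ∈ Set.Icc (-(r • 1)) (r • 1)) : ‖(ρ * X).trace‖ ≤ r := by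
  apply Complex.norm_le_of_mem_Icc
  constructor
  · simpa [hρ.2] using trace_mul_mono hρ.1.nonneg hX.1
  · simpa [hρ.2] using trace_mul_mono hρ.1.nonneg hX.2

end Matrix

section Kronecker

variable {m n : Type*} [Fintype m] [DecidableEq m] [Fintype n] [DecidableEq n]

lemma kronecker_one_mul_one_kronecker {α : Type*} [CommSemiring α] (A : Matrix m m α)
    (B : Matrix n n α) :
    (A ⊗ₖ 1) * (1 ⊗ₖ B) = A ⊗ₖ B := by
  rw [← mul_kronecker_mul, Matrix.mul_one, Matrix.one_mul]

lemma commute_kronecker_one_one_kronecker {α : Type*} [CommSemiring α] (A : Matrix m m α)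
    (B : Matrix n n α) :
    Commute (A ⊗ₖ 1) (1 ⊗ₖ B) := by
  rw [Commute, SemiconjBy, ← mul_kronecker_mul, ← mul_kronecker_mul]
  simp only [Matrix.mul_one, Matrix.one_mul]

lemma IsDichotomic.kronecker_one {A : Matrix m m ℂ} (hA : IsDichotomic A) :
    IsDichotomic (A ⊗ₖ (1 : Matrix n n ℂ)) :=
  ⟨by rw [IsHermitian, conjTranspose_kronecker, hA.1.eq, conjTranspose_one],
    by rw [← mul_kronecker_mul, hA.2, Matrix.one_mul, one_kronecker_one]⟩

lemma IsDichotomic.one_kronecker {B : Matrix n n ℂ} (hB : IsDichotomic B) :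
    IsDichotomic ((1 : Matrix m m ℂ) ⊗ₖ B) :=
  ⟨by rw [IsHermitian, conjTranspose_kronecker, hB.1.eq, conjTranspose_one],
    by rw [← mul_kronecker_mul, hB.2, Matrix.one_mul, one_kronecker_one]⟩

lemma chsh_kronecker_mem_Icc {A₁ A₂ : Matrix m m ℂ} {B₁ B₂ : Matrix n n ℂ}
    (hA₁ : IsDichotomic A₁) (hA₂ : IsDichotomic A₂) (hB₁ : IsDichotomic B₁)
    (hB₂ : IsDichotomic B₂) :
    chsh (A₁ ⊗ₖ 1) (A₂ ⊗ₖ 1) (1 ⊗ₖ B₁) (1 ⊗ₖ B₂) ∈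
      Set.Icc (-((2 * √2) • 1)) ((2 * √2) • 1) := by
  have ha₁ := hA₁.kronecker_one (n := n)
  have ha₂ := hA₂.kronecker_one (n := n)
  have hb₁ := hB₁.one_kronecker (m := m)
  have hb₂ := hB₂.one_kronecker (m := m)
  exact chsh_mem_Icc ha₁.1.isSelfAdjoint ha₂.1.isSelfAdjoint hb₁.1.isSelfAdjoint
    hb₂.1.isSelfAdjoint ha₁.2 ha₂.2 hb₁.2 hb₂.2 (commute_kronecker_one_one_kronecker _ _)
    (commute_kronecker_one_one_kronecker _ _) (commute_kronecker_one_one_kronecker _ _)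
    (commute_kronecker_one_one_kronecker _ _)

end Kronecker

/-- Tsirelson's bound: for any density matrix `ρ` on `ℂ^m ⊗ ℂ^n` and dichotomic
observables `A₁, A₂` on `ℂ^m`, `B₁, B₂` on `ℂ^n`, the CHSH expectation value
satisfies `|Tr(ρ C)| ≤ 2√2`. -/
theorem tsirelson_bound {m n : ℕ}
    (ρ : Matrix (Fin m × Fin n) (Fin m × Fin n) ℂ) (hρ : IsDensityMatrix ρ)
    (A₁ A₂ : Matrix (Fin m) (Fin m) ℂ) (B₁ B₂ : Matrix (Fin n) (Fin n) ℂ)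
    (hA₁ : IsDichotomic A₁) (hA₂ : IsDichotomic A₂)
    (hB₁ : IsDichotomic B₁) (hB₂ : IsDichotomic B₂) :
    ‖(ρ * (A₁ ⊗ₖ B₁ + A₁ ⊗ₖ B₂ + A₂ ⊗ₖ B₁ - A₂ ⊗ₖ B₂)).trace‖ ≤
      2 * Real.sqrt 2 := by
  have hC : A₁ ⊗ₖ B₁ + A₁ ⊗ₖ B₂ + A₂ ⊗ₖ B₁ - A₂ ⊗ₖ B₂ =
      chsh (A₁ ⊗ₖ 1) (A₂ ⊗ₖ 1) (1 ⊗ₖ B₁) (1 ⊗ₖ B₂) := by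
    simp only [chsh, kronecker_one_mul_one_kronecker]
  rw [hC]
  exact norm_trace_mul_le_of_mem_Icc hρ (chsh_kronecker_mem_Icc hA₁ hA₂ hB₁ hB₂)
end
end

section
/- There exist a density matrix ρ on ℂ² ⊗ ℂ² and dichotomic observables A₁, A₂, B₁, B₂ on ℂ² such that Tr(ρ C) = 2√2, where C = A₁⊗B₁ + A₁⊗B₂ + A₂⊗B₁ − A₂⊗B₂. Concretely, one may take ρ = |Φ⟩⟨Φ| with |Φ⟩ = (|00⟩ + |11⟩)/√2, A₁ = Z, A₂ = X, B₁ = (Z + X)/√2, B₂ = (Z − X)/√2, where X and Z are the Pauli matrices. Hence the Tsirelson bound 2√2 is attained and the CHSH bound 2 is violated by an entangled state. -/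
open Matrix Kronecker
open scoped ComplexOrder

noncomputable section

def myW : Matrix (Fin 1) (Fin 2 × Fin 2) ℂ :=
  Matrix.of fun _ p => if p.1 = p.2 then ((Real.sqrt 2)⁻¹ : ℝ) else 0

lemma sqrt2_sq : ((Real.sqrt 2 : ℝ) : ℂ) * ((Real.sqrt 2 : ℝ) : ℂ) = 2 := by
  norm_cast
  rw [Real.mul_self_sqrt (by norm_num)]

lemma inv_sqrt2_sq : (((Real.sqrt 2 : ℝ) : ℂ))⁻¹ * (((Real.sqrt 2 : ℝ) : ℂ))⁻¹ = 1/2 := by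
  rw [← mul_inv, sqrt2_sq]
  norm_num

/-- The Tsirelson bound `2√2` is attained: there are a two-qubit density matrix `ρ`
and dichotomic observables `A₁, A₂, B₁, B₂` on `ℂ²` with
`Tr(ρ (A₁⊗B₁ + A₁⊗B₂ + A₂⊗B₁ − A₂⊗B₂)) = 2√2 > 2`. -/
theorem tsirelson_bound_attained :
    ∃ (ρ : Matrix (Fin 2 × Fin 2) (Fin 2 × Fin 2) ℂ)
      (A₁ A₂ B₁ B₂ : Matrix (Fin 2) (Fin 2) ℂ),
      IsDensityMatrix ρ ∧
      IsDichotomic A₁ ∧ IsDichotomic A₂ ∧ IsDichotomic B₁ ∧ IsDichotomic B₂ ∧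
      (ρ * (A₁ ⊗ₖ B₁ + A₁ ⊗ₖ B₂ + A₂ ⊗ₖ B₁ - A₂ ⊗ₖ B₂)).trace =
        ((2 * Real.sqrt 2 : ℝ) : ℂ) := by
  set c : ℂ := (((Real.sqrt 2)⁻¹ : ℝ) : ℂ) with hc
  have hcc : c * c = 1/2 := by rw [hc]; push_cast; exact inv_sqrt2_sq
  refine ⟨myWᴴ * myW, !![1,0;0,-1], !![0,1;1,0],
    c • !![1,1;1,-1], c • !![1,-1;-1,-1], ⟨?_, ?_⟩, ⟨?_, ?_⟩, ⟨?_, ?_⟩, ⟨?_, ?_⟩, ⟨?_, ?_⟩, ?_⟩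
  · exact Matrix.posSemidef_conjTranspose_mul_self _
  · simp [Matrix.trace, Matrix.mul_apply, myW, Fin.sum_univ_succ, Fintype.sum_prod_type,
      mul_comm]
    rw [show ((2:ℂ) * ((↑(Real.sqrt 2))⁻¹ * (↑(Real.sqrt 2))⁻¹)) = 2 * (1/2) by rw [inv_sqrt2_sq]]
    norm_num
  · ext i j; fin_cases i <;> fin_cases j <;> simp [Matrix.conjTranspose_apply]
  · ext i j; fin_cases i <;> fin_cases j <;> simp [Matrix.mul_apply, Fin.sum_univ_succ]
  · ext i j; fin_cases i <;> fin_cases j <;> simp [Matrix.conjTranspose_apply]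
  · ext i j; fin_cases i <;> fin_cases j <;> simp [Matrix.mul_apply, Fin.sum_univ_succ]
  · ext i j; fin_cases i <;> fin_cases j <;>
      simp [Matrix.conjTranspose_apply, hc, Complex.conj_ofReal]
  · rw [Matrix.smul_mul, Matrix.mul_smul, smul_smul, hcc]
    ext i j; fin_cases i <;> fin_cases j <;>
      simp [Matrix.mul_apply, Fin.sum_univ_succ] <;> norm_num
  · ext i j; fin_cases i <;> fin_cases j <;>
      simp [Matrix.conjTranspose_apply, hc, Complex.conj_ofReal]
  · rw [Matrix.smul_mul, Matrix.mul_smul, smul_smul, hcc]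
    ext i j; fin_cases i <;> fin_cases j <;>
      simp [Matrix.mul_apply, Fin.sum_univ_succ] <;> norm_num
  · simp only [Matrix.trace, Matrix.diag, Matrix.mul_apply, Matrix.add_apply, Matrix.sub_apply,
      Matrix.kroneckerMap_apply, Matrix.smul_apply, Matrix.conjTranspose_apply, myW,
      Fintype.sum_prod_type, Fin.sum_univ_succ, Fin.sum_univ_zero, Matrix.of_apply]
    simp [Complex.conj_ofReal, hc]
    push_cast
    ring_nf
    have h0 : ((Real.sqrt 2 : ℝ) : ℂ) ≠ 0 := by
      simpa using (Real.sqrt_ne_zero' .mpr (by norm_num : (0:ℝ) < 2))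
    have hinv : ((↑(Real.sqrt 2):ℂ))⁻¹ = (↑(Real.sqrt 2):ℂ) / 2 := by
      rw [eq_div_iff (by norm_num : (2:ℂ) ≠ 0), ← sqrt2_sq, ← mul_assoc,
        inv_mul_cancel₀ h0, one_mul]
    rw [hinv]
    ring_nf
    rw [show ((Real.sqrt 2 : ℝ):ℂ) ^ 3
        = ((Real.sqrt 2 : ℝ):ℂ) * ((Real.sqrt 2 : ℝ):ℂ) * ((Real.sqrt 2 : ℝ):ℂ) by ring,
      sqrt2_sq]
    ring
end
end

section
/- If a density matrix ρ on ℂ^m ⊗ ℂ^n is separable, then its partial transpose over the second factor ρ^{T_B} is positive semidefinite. (Peres–Horodecki necessary criterion for separability.) -/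
open Matrix Kronecker
open scoped ComplexOrder

noncomputable section

/-- Partial transpose over the second tensor factor:
`(M^{T_B})_{(i,j),(i',j')} = M_{(i,j'),(i',j)}`. -/
def ptransposeB {m n : ℕ} (M : Matrix (Fin m × Fin n) (Fin m × Fin n) ℂ) :
    Matrix (Fin m × Fin n) (Fin m × Fin n) ℂ :=
  Matrix.of fun p q => M (p.1, q.2) (q.1, p.2)

/-! Partial transposition is linear and sends `σ ⊗ τ` to `σ ⊗ τᵀ`, so it maps a separable state
to a convex combination of Kronecker products of positive semidefinite matrices (`τᵀ` is again
positive semidefinite), and such a combination is positive semidefinite. -/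

theorem ptransposeB_kronecker {m n : ℕ} (A : Matrix (Fin m) (Fin m) ℂ)
    (B : Matrix (Fin n) (Fin n) ℂ) : ptransposeB (A ⊗ₖ B) = A ⊗ₖ Bᵀ :=
  rfl

theorem ptransposeB_smul {m n : ℕ} (c : ℂ) (M : Matrix (Fin m × Fin n) (Fin m × Fin n) ℂ) :
    ptransposeB (c • M) = c • ptransposeB M :=
  rfl

theorem ptransposeB_sum {m n : ℕ} {ι : Type*} (s : Finset ι)
    (M : ι → Matrix (Fin m × Fin n) (Fin m × Fin n) ℂ) :
    ptransposeB (∑ i ∈ s, M i) = ∑ i ∈ s, ptransposeB (M i) := by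
  ext
  simp only [ptransposeB, of_apply, Matrix.sum_apply]

theorem separable_implies_ppt_general {m n : ℕ}
    (ρ : Matrix (Fin m × Fin n) (Fin m × Fin n) ℂ)
    (hρsep : IsSepState ρ) :
    (ptransposeB ρ).PosSemidef := by
  obtain ⟨k, p, σ, τ, hp, -, hσ, hτ, rfl⟩ := hρsep
  simp only [ptransposeB_sum, ptransposeB_smul, ptransposeB_kronecker]
  exact posSemidef_sum _ fun i _ =>
    ((hσ i).1.kronecker (hτ i).1.transpose).smul (Complex.zero_le_real.mpr (hp i))

/-- Peres–Horodecki necessary criterion: a separable density matrix has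
positive-semidefinite partial transpose. -/
theorem separable_implies_ppt {m n : ℕ}
    (ρ : Matrix (Fin m × Fin n) (Fin m × Fin n) ℂ)
    (hρd : IsDensityMatrix ρ) (hρsep : IsSepState ρ) :
    (ptransposeB ρ).PosSemidef :=
  separable_implies_ppt_general ρ hρsep
end
end

section
/- There exists a density matrix ρ on ℂ² ⊗ ℂ² that is not separable but satisfies the CHSH inequality: for all dichotomic observables A₁, A₂, B₁, B₂ on ℂ², |Tr(ρ C)| ≤ 2, where C = A₁⊗B₁ + A₁⊗B₂ + A₂⊗B₁ − A₂⊗B₂. Hence compliance with the CHSH inequality cannot certify separability. -/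
open Matrix Kronecker
open scoped ComplexOrder

noncomputable section

/-!
The witness is the Werner state `ρ = (1 - F) / 4 + 1 / 8`, where `F` is the swap operator: the
equal mixture of the singlet projector `(1 - F) / 2` and the maximally mixed state. By the swap
trick `Tr ((σ ⊗ τ) F) = Tr (σ τ) ≥ 0`, every separable state has `Re Tr (ρ' F) ≥ 0`, whereas
`Tr (ρ F) = -1/4`.

Writing a Hermitian `A = t • 1 + a · σ⃗`, dichotomic observables satisfy `|t| + ‖a‖ = 1`, and
`Tr (ρ (A ⊗ B)) = t u - ⟪a, b⟫ / 2`. The CHSH combination regroups as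
`(t₁ x + ⟪a₁, y⟫) + (t₂ x' + ⟪a₂, y'⟫)` with `x, x' = u₁ ± u₂` and `y, y' = -(b₁ ± b₂) / 2`;
each bracket is at most `max |x| ‖y‖`, and each of the four resulting sums is at most `2`.
-/

section Swap

variable {n R : Type*} [DecidableEq n]

def swapMatrix (n R : Type*) [DecidableEq n] [Zero R] [One R] : Matrix (n × n) (n × n) R :=
  Equiv.Perm.permMatrix R (Equiv.prodComm n n)

theorem conjTranspose_swapMatrix [NonAssocSemiring R] [StarRing R] :
    (swapMatrix n R)ᴴ = swapMatrix n R := by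
  simp [swapMatrix, Equiv.Perm.inv_def, Equiv.prodComm_symm]

theorem swapMatrix_mul_self [Fintype n] [NonAssocSemiring R] :
    swapMatrix n R * swapMatrix n R = 1 := by
  rw [swapMatrix, ← permMatrix_mul]
  convert permMatrix_one
  exact Equiv.ext fun _ => rfl

theorem trace_kronecker_mul_swapMatrix [Fintype n] [CommSemiring R] (A B : Matrix n n R) :
    ((A ⊗ₖ B) * swapMatrix n R).trace = (A * B).trace := by
  rw [swapMatrix, PEquiv.mul_toMatrix_toPEquiv]
  simp [Matrix.trace, Matrix.mul_apply, Fintype.sum_prod_type, Equiv.prodComm_symm]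

theorem trace_swapMatrix [Fintype n] [CommSemiring R] :
    (swapMatrix n R).trace = Fintype.card n := by
  simpa [one_kronecker_one] using trace_kronecker_mul_swapMatrix (1 : Matrix n n R) 1

end Swap

open scoped MatrixOrder in
theorem Matrix.PosSemidef.trace_mul_nonneg_s10 {n 𝕜 : Type*} [Fintype n] [DecidableEq n] [RCLike 𝕜]
    {A B : Matrix n n 𝕜} (hA : A.PosSemidef) (hB : B.PosSemidef) : 0 ≤ (A * B).trace := by
  have hS : CFC.sqrt A * CFC.sqrt A = A := CFC.sqrt_mul_sqrt_self A hA.nonneg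
  have hSh : (CFC.sqrt A)ᴴ = CFC.sqrt A := (CFC.sqrt_nonneg A).posSemidef.isHermitian.eq
  rw [← hS, Matrix.mul_assoc, trace_mul_comm]
  nth_rewrite 2 [← hSh]
  exact (hB.mul_mul_conjTranspose_same _).trace_nonneg

theorem IsSepState.re_trace_mul_nonneg {m n : ℕ} {ρ : Matrix (Fin m × Fin n) (Fin m × Fin n) ℂ}
    (hρ : IsSepState ρ) {W : Matrix (Fin m × Fin n) (Fin m × Fin n) ℂ}
    (hW : ∀ σ τ, IsDensityMatrix σ → IsDensityMatrix τ → 0 ≤ ((σ ⊗ₖ τ) * W).trace.re) :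
    0 ≤ (ρ * W).trace.re := by
  obtain ⟨k, p, σ, τ, hp, -, hσ, hτ, rfl⟩ := hρ
  simp only [Finset.sum_mul, trace_sum, smul_mul_assoc, trace_smul, smul_eq_mul, Complex.re_sum,
    Complex.re_ofReal_mul]
  exact Finset.sum_nonneg fun i _ => mul_nonneg (hp i) (hW _ _ (hσ i) (hτ i))

theorem IsSepState.re_trace_mul_swapMatrix_nonneg {n : ℕ}
    {ρ : Matrix (Fin n × Fin n) (Fin n × Fin n) ℂ} (hρ : IsSepState ρ) :
    0 ≤ (ρ * swapMatrix (Fin n) ℂ).trace.re :=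
  hρ.re_trace_mul_nonneg fun σ τ hσ hτ => by
    rw [trace_kronecker_mul_swapMatrix]
    exact (Complex.nonneg_iff.mp (hσ.1.trace_mul_nonneg_s10 hτ.1)).1

section Bloch

/- `blochScalar A` and `blochVector A` are the coordinates `t` and `a` of
`A = t • 1 + a₁ σ₁ - a₂ σ₂ + a₃ σ₃` in the Pauli basis, whenever `A` is Hermitian. -/
def blochScalar (A : Matrix (Fin 2) (Fin 2) ℂ) : ℝ :=
  A.trace.re / 2

def blochVector (A : Matrix (Fin 2) (Fin 2) ℂ) : EuclideanSpace ℝ (Fin 3) :=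
  !₂[(A 0 1).re, (A 0 1).im, (A 0 0 - A 1 1).re / 2]

theorem Matrix.IsHermitian.fin_two_entries {A : Matrix (Fin 2) (Fin 2) ℂ} (hA : A.IsHermitian) :
    (A 0 0).im = 0 ∧ (A 1 1).im = 0 ∧ A 1 0 = starRingEnd ℂ (A 0 1) := by
  have h00 := congrArg Complex.im (hA.apply 0 0)
  have h11 := congrArg Complex.im (hA.apply 1 1)
  simp only [RCLike.star_def, Complex.conj_im] at h00 h11
  exact ⟨by linarith, by linarith, (hA.apply 1 0).symm⟩

theorem Matrix.IsHermitian.trace_eq_blochScalar {A : Matrix (Fin 2) (Fin 2) ℂ}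
    (hA : A.IsHermitian) : A.trace = 2 * (blochScalar A : ℂ) := by
  obtain ⟨hA00, hA11, -⟩ := hA.fin_two_entries
  apply Complex.ext <;> simp [blochScalar, trace_fin_two, hA00, hA11]
  ring

theorem Matrix.IsHermitian.trace_mul_eq_bloch {A B : Matrix (Fin 2) (Fin 2) ℂ}
    (hA : A.IsHermitian) (hB : B.IsHermitian) :
    (A * B).trace =
      2 * ((blochScalar A * blochScalar B + inner ℝ (blochVector A) (blochVector B) : ℝ) : ℂ) := by
  obtain ⟨hA00, hA11, hA10⟩ := hA.fin_two_entries
  obtain ⟨hB00, hB11, hB10⟩ := hB.fin_two_entries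
  simp only [trace_fin_two, mul_apply, Fin.sum_univ_two, blochScalar, blochVector,
    PiLp.inner_apply, Fin.sum_univ_three, hA10, hB10]
  apply Complex.ext <;> simp [hA00, hA11, hB00, hB11] <;> ring

theorem IsDichotomic.abs_blochScalar_add_norm_blochVector {A : Matrix (Fin 2) (Fin 2) ℂ}
    (hA : IsDichotomic A) : |blochScalar A| + ‖blochVector A‖ = 1 := by
  obtain ⟨hH, hsq⟩ := hA
  have hsphere : blochScalar A ^ 2 + ‖blochVector A‖ ^ 2 = 1 := by
    have h := hH.trace_mul_eq_bloch hH
    rw [hsq, trace_one, real_inner_self_eq_norm_sq] at h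
    have h' : (2 : ℝ) = 2 * (blochScalar A * blochScalar A + ‖blochVector A‖ ^ 2) := by
      exact_mod_cast h
    linarith
  -- `(A * A) 0 1 = Tr A * A 0 1` and `(A * A) 0 0 - (A * A) 1 1 = Tr A * (A 0 0 - A 1 1)`.
  have horth : blochScalar A * ‖blochVector A‖ = 0 := by
    have h01 := congrFun (congrFun hsq 0) 1
    have hdiag := congrArg (fun M => M 0 0 - M 1 1) hsq
    simp only [mul_apply, Fin.sum_univ_two, one_apply_eq, one_apply_ne zero_ne_one,
      sub_self] at h01 hdiag
    rcases eq_or_ne A.trace 0 with htr | htr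
    · simp [blochScalar, htr]
    · have hoff : A 0 1 = 0 := by
        refine (mul_eq_zero.mp ?_).resolve_left htr
        rw [trace_fin_two, ← h01]; ring
      have hdiff : A 0 0 - A 1 1 = 0 := by
        refine (mul_eq_zero.mp ?_).resolve_left htr
        rw [trace_fin_two, ← hdiag]; ring
      simp [blochVector, hoff, hdiff]
  have habs : |blochScalar A| * ‖blochVector A‖ = 0 := by
    rw [← abs_norm, ← abs_mul, horth, abs_zero]
  nlinarith [sq_abs (blochScalar A), abs_nonneg (blochScalar A), norm_nonneg (blochVector A)]

end Bloch

section BlochBall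

variable {E : Type*} [NormedAddCommGroup E] [InnerProductSpace ℝ E]

theorem abs_mul_add_inner_le_max {t x : ℝ} {a y : E} (h : |t| + ‖a‖ ≤ 1) :
    |t * x + inner ℝ a y| ≤ max |x| ‖y‖ :=
  calc |t * x + inner ℝ a y|
      ≤ |t * x| + |inner ℝ a y| := abs_add_le _ _
    _ ≤ |t| * |x| + ‖a‖ * ‖y‖ := by
        rw [abs_mul]
        gcongr
        exact abs_real_inner_le_norm a y
    _ ≤ |t| * max |x| ‖y‖ + ‖a‖ * max |x| ‖y‖ := by
        gcongr
        exacts [le_max_left _ _, le_max_right _ _]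
    _ ≤ max |x| ‖y‖ := by
        rw [← add_mul]
        exact mul_le_of_le_one_left (le_max_of_le_left (abs_nonneg x)) h

theorem abs_chsh_le_two {t₁ t₂ u₁ u₂ : ℝ} {a₁ a₂ b₁ b₂ : E}
    (ha₁ : |t₁| + ‖a₁‖ ≤ 1) (ha₂ : |t₂| + ‖a₂‖ ≤ 1)
    (hb₁ : |u₁| + ‖b₁‖ ≤ 1) (hb₂ : |u₂| + ‖b₂‖ ≤ 1) :
    |(t₁ * u₁ - inner ℝ a₁ b₁ / 2) + (t₁ * u₂ - inner ℝ a₁ b₂ / 2)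
      + (t₂ * u₁ - inner ℝ a₂ b₁ / 2) - (t₂ * u₂ - inner ℝ a₂ b₂ / 2)| ≤ 2 := by
  have hsplit : (t₁ * u₁ - inner ℝ a₁ b₁ / 2) + (t₁ * u₂ - inner ℝ a₁ b₂ / 2)
      + (t₂ * u₁ - inner ℝ a₂ b₁ / 2) - (t₂ * u₂ - inner ℝ a₂ b₂ / 2)
      = (t₁ * (u₁ + u₂) + inner ℝ a₁ ((-1 / 2 : ℝ) • (b₁ + b₂)))
        + (t₂ * (u₁ - u₂) + inner ℝ a₂ ((-1 / 2 : ℝ) • (b₁ - b₂))) := by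
    simp only [inner_smul_right, inner_add_right, inner_sub_right]
    ring
  have hnorm (v : E) : ‖(-1 / 2 : ℝ) • v‖ = ‖v‖ / 2 := by
    rw [norm_smul]; norm_num; ring
  rw [hsplit]
  refine (abs_add_le _ _).trans ((add_le_add (abs_mul_add_inner_le_max ha₁)
    (abs_mul_add_inner_le_max ha₂)).trans ?_)
  rw [hnorm, hnorm]
  have hsum := abs_add_le u₁ u₂
  have hdiff := abs_sub u₁ u₂
  have hbsum := norm_add_le b₁ b₂
  have hbdiff := norm_sub_le b₁ b₂
  have hu : |u₁ + u₂| + |u₁ - u₂| ≤ 2 := by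
    have h₁ := abs_le.mp (show |u₁| ≤ 1 by linarith [norm_nonneg b₁])
    have h₂ := abs_le.mp (show |u₂| ≤ 1 by linarith [norm_nonneg b₂])
    rcases abs_cases (u₁ + u₂) with ⟨hp, -⟩ | ⟨hp, -⟩ <;>
    rcases abs_cases (u₁ - u₂) with ⟨hm, -⟩ | ⟨hm, -⟩ <;> linarith
  rcases max_cases |u₁ + u₂| (‖b₁ + b₂‖ / 2) with ⟨h, -⟩ | ⟨h, -⟩ <;>
  rcases max_cases |u₁ - u₂| (‖b₁ - b₂‖ / 2) with ⟨h', -⟩ | ⟨h', -⟩ <;>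
  rw [h, h'] <;> linarith [abs_nonneg u₁, abs_nonneg u₂, norm_nonneg b₁, norm_nonneg b₂]

end BlochBall

-- Half the singlet projector `(1 - F) / 2` plus half the maximally mixed state `1 / 4`.
def wernerState : Matrix (Fin 2 × Fin 2) (Fin 2 × Fin 2) ℂ :=
  (3 / 8 : ℂ) • 1 - (1 / 4 : ℂ) • swapMatrix (Fin 2) ℂ

-- `F` is a Hermitian involution, so `(1 - F)ᴴ (1 - F) = 2 (1 - F)`.
theorem wernerState_eq :
    wernerState = (1 / 8 : ℂ) • 1
      + (1 / 8 : ℂ) • ((1 - swapMatrix (Fin 2) ℂ)ᴴ * (1 - swapMatrix (Fin 2) ℂ)) := by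
  rw [conjTranspose_sub, conjTranspose_one, conjTranspose_swapMatrix, sub_mul, mul_sub, mul_sub,
    swapMatrix_mul_self, wernerState]
  simp only [Matrix.one_mul, Matrix.mul_one]
  module

theorem wernerState_posSemidef : wernerState.PosSemidef := by
  rw [wernerState_eq]
  exact (PosSemidef.one.smul (by norm_num [Complex.nonneg_iff])).add
    ((posSemidef_conjTranspose_mul_self _).smul (by norm_num [Complex.nonneg_iff]))

theorem trace_wernerState_mul (M : Matrix (Fin 2 × Fin 2) (Fin 2 × Fin 2) ℂ) :
    (wernerState * M).trace = 3 / 8 * M.trace - 1 / 4 * (M * swapMatrix (Fin 2) ℂ).trace := by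
  rw [wernerState, sub_mul, trace_sub, smul_mul_assoc, smul_mul_assoc, trace_smul, trace_smul,
    Matrix.one_mul, trace_mul_comm (swapMatrix _ _), smul_eq_mul, smul_eq_mul]

theorem wernerState_isDensityMatrix : IsDensityMatrix wernerState := by
  refine ⟨wernerState_posSemidef, ?_⟩
  have := trace_wernerState_mul 1
  rw [Matrix.mul_one, Matrix.one_mul, trace_one, trace_swapMatrix] at this
  rw [this]
  norm_num

theorem trace_wernerState_mul_swapMatrix :
    (wernerState * swapMatrix (Fin 2) ℂ).trace = -1 / 4 := by
  rw [trace_wernerState_mul, swapMatrix_mul_self, trace_swapMatrix, trace_one]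
  norm_num

theorem not_isSepState_wernerState : ¬ IsSepState wernerState := fun h => by
  have := h.re_trace_mul_swapMatrix_nonneg
  rw [trace_wernerState_mul_swapMatrix] at this
  norm_num at this

theorem trace_wernerState_mul_kronecker {A B : Matrix (Fin 2) (Fin 2) ℂ} (hA : A.IsHermitian)
    (hB : B.IsHermitian) :
    (wernerState * (A ⊗ₖ B)).trace =
      ((blochScalar A * blochScalar B - inner ℝ (blochVector A) (blochVector B) / 2 : ℝ) : ℂ) := by
  rw [trace_wernerState_mul, trace_kronecker_mul_swapMatrix, trace_kronecker,
    hA.trace_mul_eq_bloch hB, hA.trace_eq_blochScalar, hB.trace_eq_blochScalar]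
  push_cast
  ring

theorem norm_trace_wernerState_mul_chsh_le_two {A₁ A₂ B₁ B₂ : Matrix (Fin 2) (Fin 2) ℂ}
    (hA₁ : IsDichotomic A₁) (hA₂ : IsDichotomic A₂) (hB₁ : IsDichotomic B₁)
    (hB₂ : IsDichotomic B₂) :
    ‖(wernerState * (A₁ ⊗ₖ B₁ + A₁ ⊗ₖ B₂ + A₂ ⊗ₖ B₁ - A₂ ⊗ₖ B₂)).trace‖ ≤ 2 := by
  rw [Matrix.mul_sub, Matrix.mul_add, Matrix.mul_add, trace_sub, trace_add, trace_add,
    trace_wernerState_mul_kronecker hA₁.1 hB₁.1, trace_wernerState_mul_kronecker hA₁.1 hB₂.1,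
    trace_wernerState_mul_kronecker hA₂.1 hB₁.1, trace_wernerState_mul_kronecker hA₂.1 hB₂.1]
  norm_cast
  rw [Real.norm_eq_abs]
  exact abs_chsh_le_two hA₁.abs_blochScalar_add_norm_blochVector.le
    hA₂.abs_blochScalar_add_norm_blochVector.le hB₁.abs_blochScalar_add_norm_blochVector.le
    hB₂.abs_blochScalar_add_norm_blochVector.le

/-- There is an entangled (non-separable) two-qubit density matrix satisfying the
CHSH inequality for all dichotomic observables: CHSH compliance cannot certify
separability. -/
theorem chsh_compliance_does_not_certify_separability :
    ∃ ρ : Matrix (Fin 2 × Fin 2) (Fin 2 × Fin 2) ℂ,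
      IsDensityMatrix ρ ∧ ¬ IsSepState ρ ∧
      ∀ A₁ A₂ B₁ B₂ : Matrix (Fin 2) (Fin 2) ℂ,
        IsDichotomic A₁ → IsDichotomic A₂ → IsDichotomic B₁ → IsDichotomic B₂ →
        ‖(ρ *
          (A₁ ⊗ₖ B₁ + A₁ ⊗ₖ B₂ + A₂ ⊗ₖ B₁ - A₂ ⊗ₖ B₂)).trace‖ ≤ 2 :=
  ⟨wernerState, wernerState_isDensityMatrix, not_isSepState_wernerState,
    fun _ _ _ _ => norm_trace_wernerState_mul_chsh_le_two⟩
end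
end

section
/- Let ρ be a density matrix on ℂ^m ⊗ ℂ^n such that the partial trace Tr_B(ρ) is a pure state, i.e. a rank-one projection. Then ρ factorizes as ρ = Tr_B(ρ) ⊗ Tr_A(ρ). In particular, a subsystem in a pure (maximally entangled within itself) state is separable from, and uncorrelated with, the remainder of the total system. -/
open Matrix Kronecker
open scoped ComplexOrder

noncomputable section

/-- A matrix is a pure state if it is the rank-one projection `|ψ⟩⟨ψ|` onto a
unit vector `ψ`. -/
def IsPureState {d : Type*} [Fintype d] [DecidableEq d] (ρ : Matrix d d ℂ) : Prop :=
  ∃ ψ : d → ℂ, (∑ i, ‖ψ i‖ ^ 2 = 1) ∧ ρ = Matrix.vecMulVec ψ (star ψ)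

/-- Partial trace over the second tensor factor. -/
def ptraceB {m n : ℕ} (M : Matrix (Fin m × Fin n) (Fin m × Fin n) ℂ) :
    Matrix (Fin m) (Fin m) ℂ :=
  Matrix.of fun i i' => ∑ j, M (i, j) (i', j)

/-- Partial trace over the first tensor factor. -/
def ptraceA {m n : ℕ} (M : Matrix (Fin m × Fin n) (Fin m × Fin n) ℂ) :
    Matrix (Fin n) (Fin n) ℂ :=
  Matrix.of fun j j' => ∑ i, M (i, j) (i, j')

/-! If `Tr_B ρ = |ψ⟩⟨ψ|` and `φ ⊥ ψ`, then for every `j` the quadratic forms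
`⟨φ ⊗ eⱼ, ρ (φ ⊗ eⱼ)⟩ ≥ 0` sum to `⟨φ, Tr_B ρ φ⟩ = |⟨ψ, φ⟩|² = 0`, so each vanishes and, `ρ` being
positive, `ρ (φ ⊗ eⱼ) = 0`. Taking `φ = ψ̄ₖ' eₖ - ψ̄ₖ eₖ'` shows that the columns of `ρ`, and by
hermiticity its rows, are proportional to `ψ̄` and `ψ` in the first index:
`|ψₖ|² ρ_{(i,j),(i',j')} = ψᵢ ψ̄ᵢ' ρ_{(k,j),(k,j')}`. Summing over `k` gives `ρ = Tr_B ρ ⊗ Tr_A ρ`. -/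

theorem Matrix.PosSemidef.mulVec_eq_zero_of_sum_eq_zero {ι κ : Type*} [Fintype ι]
    {ρ : Matrix ι ι ℂ} (hρ : ρ.PosSemidef) {s : Finset κ} (v : κ → ι → ℂ)
    (hsum : ∑ j ∈ s, star (v j) ⬝ᵥ ρ *ᵥ v j = 0) {j : κ} (hj : j ∈ s) :
    ρ *ᵥ v j = 0 :=
  (hρ.dotProduct_mulVec_zero_iff _).mp <|
    (Finset.sum_eq_zero_iff_of_nonneg fun j _ => hρ.dotProduct_mulVec_nonneg (v j)).mp hsum j hj

theorem sum_mul_star_eq_one_of_sum_norm_sq_eq_one {ι : Type*} [Fintype ι] {ψ : ι → ℂ}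
    (hψ : ∑ i, ‖ψ i‖ ^ 2 = 1) : ∑ i, ψ i * star (ψ i) = 1 := by
  simp only [Complex.star_def, Complex.mul_conj']
  exact_mod_cast hψ

namespace PartialTrace

variable {m n : ℕ}

/-- The product vector `φ ⊗ eⱼ`. -/
def tensorSingle (φ : Fin m → ℂ) (j : Fin n) : Fin m × Fin n → ℂ :=
  fun p => if p.2 = j then φ p.1 else 0

theorem mulVec_tensorSingle_apply (ρ : Matrix (Fin m × Fin n) (Fin m × Fin n) ℂ)
    (φ : Fin m → ℂ) (j : Fin n) (x : Fin m × Fin n) :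
    (ρ *ᵥ tensorSingle φ j) x = ∑ l, ρ x (l, j) * φ l := by
  simp [tensorSingle, mulVec, dotProduct, Fintype.sum_prod_type]

theorem star_tensorSingle_dotProduct (φ : Fin m → ℂ) (j : Fin n) (w : Fin m × Fin n → ℂ) :
    star (tensorSingle φ j) ⬝ᵥ w = ∑ l, star (φ l) * w (l, j) := by
  simp [tensorSingle, dotProduct, Fintype.sum_prod_type, apply_ite star]

theorem sum_dotProduct_mulVec_tensorSingle (ρ : Matrix (Fin m × Fin n) (Fin m × Fin n) ℂ)
    (φ : Fin m → ℂ) :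
    ∑ j, star (tensorSingle φ j) ⬝ᵥ ρ *ᵥ tensorSingle φ j = star φ ⬝ᵥ ptraceB ρ *ᵥ φ := by
  simp_rw [star_tensorSingle_dotProduct, mulVec_tensorSingle_apply]
  simp only [dotProduct, mulVec, ptraceB, of_apply, Pi.star_apply, Finset.mul_sum, Finset.sum_mul]
  rw [Finset.sum_comm]
  refine Finset.sum_congr rfl fun l _ => ?_
  rw [Finset.sum_comm]

variable {ρ : Matrix (Fin m × Fin n) (Fin m × Fin n) ℂ} {ψ : Fin m → ℂ}

theorem mulVec_tensorSingle_eq_zero (hρ : ρ.PosSemidef) (hB : ptraceB ρ = vecMulVec ψ (star ψ))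
    {φ : Fin m → ℂ} (hφ : star ψ ⬝ᵥ φ = 0) (j : Fin n) : ρ *ᵥ tensorSingle φ j = 0 :=
  hρ.mulVec_eq_zero_of_sum_eq_zero (tensorSingle φ)
    (by simp [sum_dotProduct_mulVec_tensorSingle, hB, vecMulVec_mulVec, hφ]) (Finset.mem_univ j)

theorem star_mul_apply_eq (hρ : ρ.PosSemidef) (hB : ptraceB ρ = vecMulVec ψ (star ψ))
    (x : Fin m × Fin n) (k k' : Fin m) (j : Fin n) :
    star (ψ k') * ρ x (k, j) = star (ψ k) * ρ x (k', j) := by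
  set φ : Fin m → ℂ := star (ψ k') • Pi.single k 1 - star (ψ k) • Pi.single k' 1
  have hφ : star ψ ⬝ᵥ φ = 0 := by
    simp [φ, dotProduct_sub, dotProduct_smul, mul_comm]
  have h := congrFun (mulVec_tensorSingle_eq_zero hρ hB hφ j) x
  simp only [RCLike.star_def, mulVec_tensorSingle_apply, Pi.sub_apply, Pi.smul_apply,
    Pi.single_apply, smul_eq_mul, mul_ite, mul_one, mul_zero, mul_sub, Finset.sum_sub_distrib,
    Finset.sum_ite_eq', Finset.mem_univ, ↓reduceIte, Pi.zero_apply, φ] at h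
  simp only [Complex.star_def]
  linear_combination h

theorem mul_apply_eq (hρ : ρ.PosSemidef) (hB : ptraceB ρ = vecMulVec ψ (star ψ))
    (y : Fin m × Fin n) (k k' : Fin m) (j : Fin n) :
    ψ k' * ρ (k, j) y = ψ k * ρ (k', j) y := by
  simpa [← hρ.1.apply y] using congrArg star (star_mul_apply_eq hρ hB y k k' j)

theorem mul_star_mul_apply_eq (hρ : ρ.PosSemidef) (hB : ptraceB ρ = vecMulVec ψ (star ψ))
    (i i' k : Fin m) (j j' : Fin n) :
    ψ k * star (ψ k) * ρ (i, j) (i', j') = ψ i * star (ψ i') * ρ (k, j) (k, j') := by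
  linear_combination (-ψ i) * star_mul_apply_eq hρ hB (k, j) k i' j' -
    star (ψ k) * mul_apply_eq hρ hB (i', j') k i j

end PartialTrace

/-- If the marginal `Tr_B(ρ)` of a density matrix `ρ` is a pure state, then the
joint state factorizes: `ρ = Tr_B(ρ) ⊗ Tr_A(ρ)`. -/
theorem pure_marginal_implies_product {m n : ℕ}
    (ρ : Matrix (Fin m × Fin n) (Fin m × Fin n) ℂ)
    (hρ : IsDensityMatrix ρ) (hpure : IsPureState (ptraceB ρ)) :
    ρ = (ptraceB ρ) ⊗ₖ (ptraceA ρ) := by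
  obtain ⟨ψ, hψ, hB⟩ := hpure
  ext ⟨i, j⟩ ⟨i', j'⟩
  calc ρ (i, j) (i', j')
      = (∑ k, ψ k * star (ψ k)) * ρ (i, j) (i', j') := by
        rw [sum_mul_star_eq_one_of_sum_norm_sq_eq_one hψ, one_mul]
    _ = ∑ k, ψ i * star (ψ i') * ρ (k, j) (k, j') := by
        rw [Finset.sum_mul]
        exact Finset.sum_congr rfl fun k _ => PartialTrace.mul_star_mul_apply_eq hρ.1 hB i i' k j j'
    _ = (ptraceB ρ ⊗ₖ ptraceA ρ) (i, j) (i', j') := by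
        rw [← Finset.mul_sum, kroneckerMap_apply, hB]
        rfl
end
end
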